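/- Let m be a positive integer and let b_1, …, b_m and α_1, …, α_m be real numbers such that the α_j are distinct and satisfy 0 < α_j < 1/2 for all j. Then inf_{k∈ℤ} ∑_{j=1}^m b_j cos(2π α_j k) ≤ −(1/(2m)) ∑_{j=1}^m |b_j|. -/

import Mathlib

/-!
Let `L` be the infimum and `F k = ∑ⱼ bⱼ cos (2π αⱼ k)`. Fix `j₀` and `σ = ±1`; the weight
`1 + σ cos (2π αⱼ₀ k)` is nonnegative, so `L (1 + σ cos (2π αⱼ₀ k)) ≤ F k (1 + σ cos (2π αⱼ₀ k))`.
Averaging over `0 ≤ k < N` and letting `N → ∞`, every cosine `cos (2π β k)` with `0 < |β| < 1`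
averages to `0`. Since the `αⱼ` are distinct and lie in `(0, 1/2)`, the only frequency of the
product that vanishes is `αⱼ₀ - αⱼ₀`, so the limit reads `L ≤ σ bⱼ₀ / 2`, i.e. `L ≤ -|bⱼ₀| / 2`.
Summing over `j₀` gives the bound.
-/

open Real Finset Filter Topology

noncomputable def cesaroMean (u : ℕ → ℝ) (N : ℕ) : ℝ := (∑ k ∈ range N, u k) / N

section CesaroMean

variable {u v : ℕ → ℝ} {a b : ℝ}

lemma cesaroMean_mono (h : ∀ k, u k ≤ v k) (N : ℕ) : cesaroMean u N ≤ cesaroMean v N :=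
  div_le_div_of_nonneg_right (sum_le_sum fun k _ => h k) N.cast_nonneg

lemma cesaroMean_sum {ι : Type*} (s : Finset ι) (u : ι → ℕ → ℝ) :
    cesaroMean (fun k => ∑ i ∈ s, u i k) = fun N => ∑ i ∈ s, cesaroMean (u i) N := by
  ext N
  simp only [cesaroMean, sum_comm (s := range N), sum_div]

lemma tendsto_cesaroMean_const (c : ℝ) : Tendsto (cesaroMean fun _ => c) atTop (𝓝 c) := by
  refine tendsto_const_nhds.congr' ?_
  filter_upwards [eventually_gt_atTop 0] with N hN
  simp [cesaroMean, hN.ne']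

lemma Filter.Tendsto.cesaroMean_add (hu : Tendsto (cesaroMean u) atTop (𝓝 a))
    (hv : Tendsto (cesaroMean v) atTop (𝓝 b)) :
    Tendsto (cesaroMean fun k => u k + v k) atTop (𝓝 (a + b)) :=
  (hu.add hv).congr fun N => by simp only [cesaroMean, sum_add_distrib, add_div]

lemma Filter.Tendsto.cesaroMean_const_mul (c : ℝ) (hu : Tendsto (cesaroMean u) atTop (𝓝 a)) :
    Tendsto (cesaroMean fun k => c * u k) atTop (𝓝 (c * a)) :=
  (hu.const_mul c).congr fun N => by simp only [cesaroMean, ← mul_sum, mul_div_assoc]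

end CesaroMean

lemma two_mul_sin_half_mul_sum_range_cos (θ : ℝ) (N : ℕ) :
    2 * sin (θ / 2) * ∑ k ∈ range N, cos (θ * k) = sin ((N - 1 / 2) * θ) + sin (θ / 2) := by
  have htelescope : ∀ k : ℕ, 2 * sin (θ / 2) * cos (θ * k) =
      sin (((k + 1 : ℕ) - 1 / 2) * θ) - sin ((k - 1 / 2) * θ) := by
    intro k
    rw [show ((k + 1 : ℕ) - 1 / 2) * θ = θ * k + θ / 2 by push_cast; ring,
      show (k - 1 / 2) * θ = θ * k - θ / 2 by ring, sin_add, sin_sub]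
    ring
  rw [mul_sum, sum_congr rfl fun k _ => htelescope k,
    sum_range_sub (fun k : ℕ => sin ((k - 1 / 2) * θ)),
    show ((0 : ℕ) - 1 / 2 : ℝ) * θ = -(θ / 2) by push_cast; ring, sin_neg, sub_neg_eq_add]

lemma abs_sum_range_cos_le {θ : ℝ} (hθ : sin (θ / 2) ≠ 0) (N : ℕ) :
    |∑ k ∈ range N, cos (θ * k)| ≤ 1 / |sin (θ / 2)| := by
  have hbound : |2 * sin (θ / 2) * ∑ k ∈ range N, cos (θ * k)| ≤ 2 := by
    rw [two_mul_sin_half_mul_sum_range_cos]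
    linarith [abs_add_le (sin ((N - 1 / 2) * θ)) (sin (θ / 2)),
      abs_sin_le_one ((N - 1 / 2) * θ), abs_sin_le_one (θ / 2)]
  rw [abs_mul, abs_mul, abs_two] at hbound
  rw [le_div_iff₀ (abs_pos.mpr hθ)]
  linarith

lemma tendsto_cesaroMean_cos_of_sin_half_ne_zero {θ : ℝ} (hθ : sin (θ / 2) ≠ 0) :
    Tendsto (cesaroMean fun k => cos (θ * k)) atTop (𝓝 0) := by
  refine squeeze_zero_norm (fun N => ?_) (tendsto_const_div_atTop_nhds_zero_nat (1 / |sin (θ / 2)|))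
  rw [cesaroMean, norm_div, Real.norm_natCast, Real.norm_eq_abs]
  exact div_le_div_of_nonneg_right (abs_sum_range_cos_le hθ N) N.cast_nonneg

lemma tendsto_cesaroMean_cos {β : ℝ} (hβ : |β| < 1) :
    Tendsto (cesaroMean fun k => cos (2 * π * β * k)) atTop (𝓝 (if β = 0 then 1 else 0)) := by
  by_cases hβ0 : β = 0
  · simpa [hβ0] using tendsto_cesaroMean_const 1
  rw [if_neg hβ0]
  apply tendsto_cesaroMean_cos_of_sin_half_ne_zero
  rw [abs_lt] at hβ
  rw [show 2 * π * β / 2 = π * β by ring, Ne,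
    sin_eq_zero_iff_of_lt_of_lt (by nlinarith [pi_pos]) (by nlinarith [pi_pos])]
  exact mul_ne_zero pi_ne_zero hβ0

lemma neg_sum_abs_le_sum_mul_cos {ι : Type*} (s : Finset ι) (b x : ι → ℝ) :
    -∑ j ∈ s, |b j| ≤ ∑ j ∈ s, b j * cos (x j) := by
  rw [← sum_neg_distrib]
  refine sum_le_sum fun j _ => ?_
  have : |b j * cos (x j)| ≤ |b j| := by
    rw [abs_mul]
    exact mul_le_of_le_one_right (abs_nonneg _) (abs_cos_le_one _)
  linarith [neg_abs_le (b j * cos (x j))]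

section CosineSum

variable {ι : Type*} {s : Finset ι} (b : ι → ℝ) {α : ι → ℝ}

lemma tendsto_cesaroMean_cosineSum (hα : ∀ j ∈ s, 0 < α j ∧ α j < 1 / 2) :
    Tendsto (cesaroMean fun k => ∑ j ∈ s, b j * cos (2 * π * α j * k)) atTop (𝓝 0) := by
  have hterm : ∀ j ∈ s,
      Tendsto (cesaroMean fun k => b j * cos (2 * π * α j * k)) atTop (𝓝 0) := by
    intro j hj
    obtain ⟨hpos, hlt⟩ := hα j hj
    have hcos := tendsto_cesaroMean_cos (β := α j) (by rw [abs_lt]; constructor <;> linarith)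
    simpa [hpos.ne'] using hcos.cesaroMean_const_mul (b j)
  simpa [cesaroMean_sum] using tendsto_finsetSum s hterm

lemma tendsto_cesaroMean_cosineSum_mul_cos (hα : ∀ j ∈ s, 0 < α j ∧ α j < 1 / 2)
    (hinj : Set.InjOn α s) {j₀ : ι} (hj₀ : j₀ ∈ s) :
    Tendsto (cesaroMean fun k => (∑ j ∈ s, b j * cos (2 * π * α j * k)) * cos (2 * π * α j₀ * k))
      atTop (𝓝 (b j₀ / 2)) := by
  classical
  obtain ⟨hpos₀, hlt₀⟩ := hα j₀ hj₀
  have hproduct : ∀ k : ℕ, (∑ j ∈ s, b j * cos (2 * π * α j * k)) * cos (2 * π * α j₀ * k) =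
      ∑ j ∈ s, (b j / 2 * cos (2 * π * (α j + α j₀) * k)
        + b j / 2 * cos (2 * π * (α j - α j₀) * k)) := by
    intro k
    rw [sum_mul]
    refine sum_congr rfl fun j _ => ?_
    rw [show 2 * π * (α j + α j₀) * k = 2 * π * α j * k + 2 * π * α j₀ * k by ring,
      show 2 * π * (α j - α j₀) * k = 2 * π * α j * k - 2 * π * α j₀ * k by ring,
      cos_add, cos_sub]
    ring
  have hterm : ∀ j ∈ s, Tendsto (cesaroMean fun k => b j / 2 * cos (2 * π * (α j + α j₀) * k)
      + b j / 2 * cos (2 * π * (α j - α j₀) * k)) atTop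
        (𝓝 (b j / 2 * 0 + b j / 2 * if j = j₀ then 1 else 0)) := by
    intro j hj
    obtain ⟨hpos, hlt⟩ := hα j hj
    have hsum := tendsto_cesaroMean_cos (β := α j + α j₀)
      (by rw [abs_lt]; constructor <;> linarith)
    have hdiff := tendsto_cesaroMean_cos (β := α j - α j₀)
      (by rw [abs_lt]; constructor <;> linarith)
    have hfreq : α j - α j₀ = 0 ↔ j = j₀ := sub_eq_zero.trans (hinj.eq_iff hj hj₀)
    simpa only [if_neg (show α j + α j₀ ≠ 0 by linarith), hfreq] using
      (hsum.cesaroMean_const_mul (b j / 2)).cesaroMean_add (hdiff.cesaroMean_const_mul (b j / 2))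
  have hlim := tendsto_finsetSum s hterm
  simp only [mul_zero, zero_add, mul_ite, mul_one, sum_ite_eq', if_pos hj₀] at hlim
  simpa only [hproduct, cesaroMean_sum] using hlim

lemma le_neg_abs_half_of_forall_le_cosineSum (hα : ∀ j ∈ s, 0 < α j ∧ α j < 1 / 2)
    (hinj : Set.InjOn α s) {L : ℝ} (hL : ∀ k : ℕ, L ≤ ∑ j ∈ s, b j * cos (2 * π * α j * k))
    {j₀ : ι} (hj₀ : j₀ ∈ s) : L ≤ -|b j₀| / 2 := by
  set F : ℕ → ℝ := fun k => ∑ j ∈ s, b j * cos (2 * π * α j * k)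
  set c : ℕ → ℝ := fun k => cos (2 * π * α j₀ * k)
  have hweighted : ∀ σ : ℝ, |σ| ≤ 1 → L ≤ σ * (b j₀ / 2) := by
    intro σ hσ
    have hweight : ∀ k, 0 ≤ 1 + σ * c k := fun k => by
      have : |σ * c k| ≤ 1 := by
        rw [abs_mul]; exact mul_le_one₀ hσ (abs_nonneg _) (abs_cos_le_one _)
      linarith [neg_abs_le (σ * c k)]
    have hc : Tendsto (cesaroMean c) atTop (𝓝 0) := by
      obtain ⟨hpos₀, hlt₀⟩ := hα j₀ hj₀
      simpa [hpos₀.ne'] using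
        tendsto_cesaroMean_cos (β := α j₀) (by rw [abs_lt]; constructor <;> linarith)
    have hlower : Tendsto (cesaroMean fun k => L * (1 + σ * c k)) atTop (𝓝 (L * (1 + σ * 0))) :=
      ((tendsto_cesaroMean_const 1).cesaroMean_add
        (hc.cesaroMean_const_mul σ)).cesaroMean_const_mul L
    have hupper : Tendsto (cesaroMean fun k => F k + σ * (F k * c k)) atTop
        (𝓝 (0 + σ * (b j₀ / 2))) :=
      (tendsto_cesaroMean_cosineSum b hα).cesaroMean_add
        ((tendsto_cesaroMean_cosineSum_mul_cos b hα hinj hj₀).cesaroMean_const_mul σ)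
    have := le_of_tendsto_of_tendsto' hlower hupper fun N => cesaroMean_mono (fun k => by
      nlinarith [hL k, hweight k]) N
    linarith
  cases abs_cases (b j₀) <;>
    linarith [hweighted 1 (by norm_num), hweighted (-1) (by norm_num)]

end CosineSum

theorem one_sided_cosine_sum_general
    (m : ℕ) (b α : ℕ → ℝ)
    (hα : ∀ j ∈ Finset.Icc 1 m, 0 < α j ∧ α j < 1 / 2)
    (hαdist : Set.InjOn α (Set.Icc 1 m)) :
    (⨅ k : ℤ, ∑ j ∈ Finset.Icc 1 m, b j * Real.cos (2 * Real.pi * α j * k)) ≤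
      -(1 / (2 * m)) * ∑ j ∈ Finset.Icc 1 m, |b j| := by
  rcases Nat.eq_zero_or_pos m with rfl | hm
  · simp
  set L := ⨅ k : ℤ, ∑ j ∈ Finset.Icc 1 m, b j * Real.cos (2 * Real.pi * α j * k)
  have hL : ∀ k : ℕ, L ≤ ∑ j ∈ Icc 1 m, b j * cos (2 * π * α j * k) := fun k => by
    have hbdd : BddBelow (Set.range fun k : ℤ => ∑ j ∈ Icc 1 m, b j * cos (2 * π * α j * k)) :=
      ⟨_, Set.forall_mem_range.mpr fun k : ℤ =>
        neg_sum_abs_le_sum_mul_cos (Icc 1 m) b fun j => 2 * π * α j * k⟩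
    simpa using ciInf_le hbdd (k : ℤ)
  have hb : ∀ j ∈ Icc 1 m, |b j| ≤ -2 * L := fun j hj => by
    linarith [le_neg_abs_half_of_forall_le_cosineSum b hα (by simpa using hαdist) hL hj]
  have hsum := sum_le_card_nsmul _ _ _ hb
  rw [Nat.card_Icc, add_tsub_cancel_right, nsmul_eq_mul] at hsum
  have hm' : (0 : ℝ) < m := by exact_mod_cast hm
  rw [neg_mul, le_neg, one_div, inv_mul_le_iff₀ (by positivity)]
  linarith

/-- **Corollary 4 (Beukers–Tijdeman): one-sided cosine sums.**
Let `b 1, …, b m` and `α 1, …, α m` be real numbers with the `α j` distinct and strictly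
between `0` and `1/2`.  Then
`inf_{k ∈ ℤ} ∑ j, b j * cos (2π α j k) ≤ -(1/(2m)) ∑ j |b j|`. -/
theorem one_sided_cosine_sum
    (m : ℕ) (hm : 1 ≤ m) (b α : ℕ → ℝ)
    (hα : ∀ j ∈ Finset.Icc 1 m, 0 < α j ∧ α j < 1 / 2)
    (hαdist : Set.InjOn α (Set.Icc 1 m)) :
    (⨅ k : ℤ, ∑ j ∈ Finset.Icc 1 m, b j * Real.cos (2 * Real.pi * α j * k)) ≤
      -(1 / (2 * m)) * ∑ j ∈ Finset.Icc 1 m, |b j| :=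
  one_sided_cosine_sum_general m b α hα hαdist
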